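/- In the ring ℤ_p[Γ_n] with Γ_n cyclic of order pⁿ generated by γ, the intersection of the augmentation ideal (γ − 1) with the ideal (p^u) equals the principal ideal (p^u(γ − 1)). -/

import Mathlib

noncomputable abbrev padicGroupRing (p n : ℕ) [Fact p.Prime] : Type :=
  MonoidAlgebra ℤ_[p] (Multiplicative (ZMod (p ^ n)))

noncomputable def γgen (p n : ℕ) [Fact p.Prime] : padicGroupRing p n :=
  MonoidAlgebra.of ℤ_[p] (Multiplicative (ZMod (p ^ n))) (Multiplicative.ofAdd 1)

/-!
The augmentation ideal of `R[G]` is spanned by the elements `g - 1`, and when `G` is generated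
by `γ`, by `γ - 1` alone, since `γ - 1 ∣ γ ^ k - 1`. If `x = p ^ u * y` has augmentation `0`,
then so does `y`, because `p ^ u` is a nonzerodivisor in `ℤ_p`; hence `y ∈ (γ - 1)`.
-/

theorem RingHom.ker_inf_span_singleton {A B F : Type*} [CommSemiring A] [Semiring B]
    [FunLike F A B] [RingHomClass F A B] (f : F) {c : A} (hc : IsLeftRegular (f c)) :
    RingHom.ker f ⊓ Ideal.span {c} = Ideal.span {c} * RingHom.ker f := by
  refine le_antisymm ?_ (inf_comm (RingHom.ker f) _ ▸ Ideal.mul_le_inf)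
  rintro x ⟨hfx, hx⟩
  obtain ⟨y, rfl⟩ := Ideal.mem_span_singleton'.mp (hx : x ∈ Ideal.span {c})
  have hfy : f y = 0 :=
    hc (show f c * f y = f c * 0 by rw [mul_zero, ← map_mul, mul_comm]; exact hfx)
  exact mul_comm y c ▸ Ideal.mul_mem_mul (Ideal.mem_span_singleton_self c) hfy

namespace MonoidAlgebra

variable (R G : Type*) [CommRing R] [Monoid G]

noncomputable def augmentation : MonoidAlgebra R G →ₐ[R] R := lift R R G 1

variable {R G}

@[simp]
theorem augmentation_single (g : G) (r : R) : augmentation R G (single g r) = r := by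
  simp [augmentation]

theorem ker_augmentation :
    RingHom.ker (augmentation R G) = Ideal.span (Set.range fun g : G ↦ of R G g - 1) := by
  refine le_antisymm (fun x hx ↦ ?_) (Ideal.span_le.mpr ?_)
  · have sub_mem : ∀ y : MonoidAlgebra R G,
        y - augmentation R G y • 1 ∈ Ideal.span (Set.range fun g : G ↦ of R G g - 1) := by
      intro y
      induction y using induction_linear with
      | zero => simp
      | add a b ha hb =>
        simpa only [map_add, add_smul, add_sub_add_comm] using Ideal.add_mem _ ha hb
      | single g a =>
        have hg : of R G g - 1 ∈ Ideal.span (Set.range fun g : G ↦ of R G g - 1) :=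
          Ideal.subset_span ⟨g, rfl⟩
        simpa [smul_sub] using Submodule.smul_of_tower_mem _ a hg
    simpa [RingHom.mem_ker.mp hx] using sub_mem x
  · rintro _ ⟨g, rfl⟩
    simp

theorem span_range_of_sub_one_eq_span_singleton {G : Type*} [CommMonoid G] {g : G}
    (hg : ∀ x : G, x ∈ Submonoid.powers g) :
    Ideal.span (Set.range fun x : G ↦ of R G x - 1) = Ideal.span {of R G g - 1} := by
  refine le_antisymm (Ideal.span_le.mpr ?_) (Ideal.span_mono ?_)
  · rintro _ ⟨x, rfl⟩
    obtain ⟨k, rfl⟩ := hg x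
    simpa [Ideal.mem_span_singleton] using sub_dvd_pow_sub_pow (of R G g) 1 k
  · simp

end MonoidAlgebra

theorem Multiplicative.mem_powers_ofAdd_one {m : ℕ} [NeZero m] (x : Multiplicative (ZMod m)) :
    x ∈ Submonoid.powers (ofAdd 1) :=
  ⟨x.toAdd.val, by
    show ofAdd 1 ^ x.toAdd.val = x
    rw [← ofAdd_nsmul, nsmul_one, ZMod.natCast_zmod_val]
    rfl⟩

/-- In `ℤ_p[Γ_n]`, the intersection of the augmentation ideal `(γ − 1)` with the ideal
`(p^u)` is the principal ideal `(p^u(γ − 1))`. -/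
theorem aug_inter_p_pow (p u n : ℕ) [Fact p.Prime] :
    Ideal.span {γgen p n - 1} ⊓ Ideal.span {(p : padicGroupRing p n) ^ u} =
      Ideal.span {(p : padicGroupRing p n) ^ u * (γgen p n - 1)} := by
  set ε := MonoidAlgebra.augmentation ℤ_[p] (Multiplicative (ZMod (p ^ n)))
  have hspan : Ideal.span {γgen p n - 1} = RingHom.ker ε := by
    rw [MonoidAlgebra.ker_augmentation, γgen]
    exact (MonoidAlgebra.span_range_of_sub_one_eq_span_singleton
      (Multiplicative.mem_powers_ofAdd_one (m := p ^ n))).symm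
  have hp : IsLeftRegular (ε ((p : padicGroupRing p n) ^ u)) := by
    rw [map_pow, map_natCast]
    exact (IsRegular.of_ne_zero (pow_ne_zero u (NeZero.ne (p : ℤ_[p])))).left
  rw [hspan, RingHom.ker_inf_span_singleton ε hp, ← hspan,
    Ideal.span_singleton_mul_span_singleton]
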